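/- Let (q, p, H) solve the Painlevé III′ Hamiltonian system with parameters v1, v2 ∈ ℂ on an open set U ⊆ ℂ with 0 ∉ U, assume q(s) ≠ 0 and q(s)·(q(s)·p(s) − (v1+v2)/2) + s ≠ 0 for all s ∈ U, and let (q̃, p̃) be the T₂-transformed solution with parameters (v1+1, v2−1), given by p̃ := (q/s)·((v1+v2)/2 − qp) and q̃ := s/q − ((2+v1−v2)/2)·s/(q·(qp − (v1+v2)/2) + s), with Hamiltonian H̃. Define Q(t) := q(t²)/t and P(t) := t·p(t²) on V := {t ∈ ℂ : t ≠ 0, t² ∈ U}, which solve the Painlevé III Hamiltonian system with parameters (v1, v2), η0 = η∞ = 1, with Hamiltonian H_III. Then for all t ∈ V, with s = t²: t·H_III(t) = s·H(s) + s·H̃(s). That is, the Painlevé III Hamiltonian is the sum of the Painlevé III′ Hamiltonian with parameters (v1, v2) and the Painlevé III′ Hamiltonian with parameters T₂(v1, v2) = (v1+1, v2−1). -/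

import Mathlib

open Complex

/-- `(q, p, H)` solves the Painlevé III′ Hamiltonian system with parameters
`v1, v2` on an open set `U ⊆ ℂ` with `0 ∉ U`. -/
def SolvesPIII' (v1 v2 : ℂ) (U : Set ℂ) (q p H : ℂ → ℂ) : Prop :=
  IsOpen U ∧ (0 : ℂ) ∉ U ∧
    DifferentiableOn ℂ q U ∧ DifferentiableOn ℂ p U ∧
    (∀ s ∈ U, s * H s =
      q s ^ 2 * p s ^ 2 - (q s ^ 2 + v1 * q s - s) * p s
        + (1 / 2) * (v1 + v2) * q s) ∧
    (∀ s ∈ U, s * deriv q s = 2 * q s ^ 2 * p s - q s ^ 2 - v1 * q s + s) ∧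
    (∀ s ∈ U, s * deriv p s =
      -2 * q s * p s ^ 2 + 2 * q s * p s + v1 * p s - (1 / 2) * (v1 + v2))

/-- `(q, p, H)` solves the Painlevé III Hamiltonian system with parameters
`v1, v2, η0, ηinf` on an open set `U ⊆ ℂ` with `0 ∉ U`. -/
def SolvesPIII (v1 v2 η0 ηinf : ℂ) (U : Set ℂ) (q p H : ℂ → ℂ) : Prop :=
  IsOpen U ∧ (0 : ℂ) ∉ U ∧
    DifferentiableOn ℂ q U ∧ DifferentiableOn ℂ p U ∧
    (∀ t ∈ U, t * H t =
      2 * q t ^ 2 * p t ^ 2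
        - (2 * ηinf * t * q t ^ 2 + (2 * v1 + 1) * q t - 2 * η0 * t) * p t
        + ηinf * (v1 + v2) * t * q t) ∧
    (∀ t ∈ U, t * deriv q t =
      4 * q t ^ 2 * p t - 2 * ηinf * t * q t ^ 2 - (2 * v1 + 1) * q t + 2 * η0 * t) ∧
    (∀ t ∈ U, t * deriv p t =
      -4 * q t * p t ^ 2 + 4 * ηinf * t * q t * p t + (2 * v1 + 1) * p t
        - ηinf * (v1 + v2) * t)

/-! `T₂` shifts `s·H` by exactly `-q p`, and the substitution `s = t²`, `Q = q/t`, `P = t p`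
turns the Painlevé III′ system into the Painlevé III system with `η₀ = η∞ = 1` and
`t·H_III = 2 s H - q p`. Adding the two identities gives `t·H_III = s H + s H̃`. -/

-- The Hamiltonians multiplied by the independent variable, as functions of it and the coordinates.
noncomputable def hamPIII' (v1 v2 s q p : ℂ) : ℂ :=
  q ^ 2 * p ^ 2 - (q ^ 2 + v1 * q - s) * p + (1 / 2) * (v1 + v2) * q

noncomputable def hamPIII (v1 v2 η0 ηinf t Q P : ℂ) : ℂ :=
  2 * Q ^ 2 * P ^ 2 - (2 * ηinf * t * Q ^ 2 + (2 * v1 + 1) * Q - 2 * η0 * t) * P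
    + ηinf * (v1 + v2) * t * Q

theorem hamPIII'_T2 {v1 v2 s q p : ℂ} (hq : q ≠ 0) (hs : s ≠ 0)
    (hD : q * (q * p - (v1 + v2) / 2) + s ≠ 0) :
    hamPIII' (v1 + 1) (v2 - 1) s
      (s / q - ((2 + v1 - v2) / 2) * s / (q * (q * p - (v1 + v2) / 2) + s))
      ((q / s) * ((v1 + v2) / 2 - q * p)) =
      hamPIII' v1 v2 s q p - q * p := by
  -- With `p` eliminated in favour of `D`, every denominator is a monomial in `q`, `s`, `D`.
  generalize hD' : q * (q * p - (v1 + v2) / 2) + s = D at hD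
  obtain rfl : p = (D - s + (v1 + v2) / 2 * q) / q ^ 2 := by
    rw [← hD']
    field_simp
    ring
  unfold hamPIII'
  field_simp
  ring

theorem hamPIII_sq_rescale (v1 v2 q p : ℂ) {t : ℂ} (ht : t ≠ 0) :
    hamPIII v1 v2 1 1 t (q / t) (t * p) = 2 * hamPIII' v1 v2 (t ^ 2) q p - q * p := by
  unfold hamPIII hamPIII'
  field_simp
  ring

section SquareSubstitution

variable {𝕜 : Type*} [NontriviallyNormedField 𝕜] {f : 𝕜 → 𝕜} {f' t : 𝕜}

theorem HasDerivAt.comp_sq (hf : HasDerivAt f f' (t ^ 2)) :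
    HasDerivAt (fun x => f (x ^ 2)) (2 * t * f') t :=
  (hf.comp t (hasDerivAt_pow 2 t)).congr_deriv (by norm_num; ring)

theorem HasDerivAt.comp_sq_div (hf : HasDerivAt f f' (t ^ 2)) (ht : t ≠ 0) :
    HasDerivAt (fun x => f (x ^ 2) / x) ((2 * t ^ 2 * f' - f (t ^ 2)) / t ^ 2) t :=
  (hf.comp_sq.div (hasDerivAt_id' t) ht).congr_deriv (by ring)

theorem HasDerivAt.mul_comp_sq (hf : HasDerivAt f f' (t ^ 2)) :
    HasDerivAt (fun x => x * f (x ^ 2)) (f (t ^ 2) + 2 * t ^ 2 * f') t :=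
  ((hasDerivAt_id' t).mul hf.comp_sq).congr_deriv (by ring)

end SquareSubstitution

theorem SolvesPIII'.solvesPIII_sq_rescale {v1 v2 : ℂ} {U : Set ℂ} {q p H Q P : ℂ → ℂ}
    (h : SolvesPIII' v1 v2 U q p H)
    (hQ : ∀ t ∈ {t : ℂ | t ≠ 0 ∧ t ^ 2 ∈ U}, Q t = q (t ^ 2) / t)
    (hP : ∀ t ∈ {t : ℂ | t ≠ 0 ∧ t ^ 2 ∈ U}, P t = t * p (t ^ 2)) :
    SolvesPIII v1 v2 1 1 {t : ℂ | t ≠ 0 ∧ t ^ 2 ∈ U} Q P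
      (fun t => hamPIII v1 v2 1 1 t (Q t) (P t) / t) := by
  obtain ⟨hUo, -, hqd, hpd, -, hq', hp'⟩ := h
  have hVo : IsOpen {t : ℂ | t ≠ 0 ∧ t ^ 2 ∈ U} :=
    isOpen_ne.inter (hUo.preimage (continuous_pow 2))
  have hQd : ∀ t ∈ {t : ℂ | t ≠ 0 ∧ t ^ 2 ∈ U},
      HasDerivAt Q ((2 * t ^ 2 * deriv q (t ^ 2) - q (t ^ 2)) / t ^ 2) t := fun t ht =>
    ((hqd.differentiableAt (hUo.mem_nhds ht.2)).hasDerivAt.comp_sq_div ht.1).congr_of_eventuallyEq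
      (Filter.eventuallyEq_of_mem (hVo.mem_nhds ht) hQ)
  have hPd : ∀ t ∈ {t : ℂ | t ≠ 0 ∧ t ^ 2 ∈ U},
      HasDerivAt P (p (t ^ 2) + 2 * t ^ 2 * deriv p (t ^ 2)) t := fun t ht =>
    ((hpd.differentiableAt (hUo.mem_nhds ht.2)).hasDerivAt.mul_comp_sq).congr_of_eventuallyEq
      (Filter.eventuallyEq_of_mem (hVo.mem_nhds ht) hP)
  refine ⟨hVo, fun h0 => h0.1 rfl, fun t ht => (hQd t ht).differentiableAt.differentiableWithinAt,
    fun t ht => (hPd t ht).differentiableAt.differentiableWithinAt, fun t ht => ?_,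
    fun t ht => ?_, fun t ht => ?_⟩
  · exact mul_div_cancel₀ _ ht.1
  · rw [(hQd t ht).deriv, hQ t ht, hP t ht]
    field_simp [ht.1]
    linear_combination 2 * hq' _ ht.2
  · rw [(hPd t ht).deriv, hQ t ht, hP t ht]
    field_simp [ht.1]
    linear_combination 2 * hp' _ ht.2

/-- The Painlevé III Hamiltonian obtained from a Painlevé III′ solution via
`Q(t) = q(t²)/t`, `P(t) = t·p(t²)` is the sum of the Painlevé III′ Hamiltonian
with parameters `(v1, v2)` and the `T₂`-transformed Painlevé III′ Hamiltonian
with parameters `(v1+1, v2−1)`. -/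
theorem painleveIII_hamiltonian_sum (v1 v2 : ℂ) (U : Set ℂ)
    (q p H qt pt Ht : ℂ → ℂ)
    (hsol : SolvesPIII' v1 v2 U q p H)
    (hq : ∀ s ∈ U, q s ≠ 0)
    (hden : ∀ s ∈ U, q s * (q s * p s - (v1 + v2) / 2) + s ≠ 0)
    (hpt : ∀ s ∈ U, pt s = (q s / s) * ((v1 + v2) / 2 - q s * p s))
    (hqt : ∀ s ∈ U, qt s =
      s / q s - ((2 + v1 - v2) / 2) * s /
        (q s * (q s * p s - (v1 + v2) / 2) + s))
    (hsolt : SolvesPIII' (v1 + 1) (v2 - 1) U qt pt Ht)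
    (V : Set ℂ) (hV : V = {t : ℂ | t ≠ 0 ∧ t ^ 2 ∈ U})
    (Q P : ℂ → ℂ)
    (hQ : ∀ t ∈ V, Q t = q (t ^ 2) / t)
    (hP : ∀ t ∈ V, P t = t * p (t ^ 2)) :
    ∃ HIII : ℂ → ℂ,
      SolvesPIII v1 v2 1 1 V Q P HIII ∧
      ∀ t ∈ V, t * HIII t = t ^ 2 * H (t ^ 2) + t ^ 2 * Ht (t ^ 2) := by
  subst hV
  refine ⟨_, hsol.solvesPIII_sq_rescale hQ hP, fun t ht => ?_⟩
  obtain ⟨ht0, hts⟩ := ht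
  rw [mul_div_cancel₀ _ ht0, hQ t ⟨ht0, hts⟩, hP t ⟨ht0, hts⟩]
  calc hamPIII v1 v2 1 1 t (q (t ^ 2) / t) (t * p (t ^ 2))
      = 2 * hamPIII' v1 v2 (t ^ 2) (q (t ^ 2)) (p (t ^ 2)) - q (t ^ 2) * p (t ^ 2) :=
        hamPIII_sq_rescale _ _ _ _ ht0
    _ = hamPIII' v1 v2 (t ^ 2) (q (t ^ 2)) (p (t ^ 2))
          + hamPIII' (v1 + 1) (v2 - 1) (t ^ 2) (qt (t ^ 2)) (pt (t ^ 2)) := by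
        rw [hpt _ hts, hqt _ hts, hamPIII'_T2 (hq _ hts) (pow_ne_zero 2 ht0) (hden _ hts)]
        ring
    _ = t ^ 2 * H (t ^ 2) + t ^ 2 * Ht (t ^ 2) :=
        (congrArg₂ (· + ·) (hsol.2.2.2.2.1 _ hts) (hsolt.2.2.2.2.1 _ hts)).symm
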